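/- A pairwise anticommuting subset G ⊆ (𝔽₂)^{2n} is maximal (no element of V anticommutes with every element of G) if and only if the sum of all elements of G is 0. -/

import Mathlib

/-- The phase space `(𝔽₂)^{2n}`, modeled as pairs of vectors in `𝔽₂ⁿ`. -/
abbrev V (n : ℕ) := (Fin n → ZMod 2) × (Fin n → ZMod 2)

/-- The standard symplectic bilinear form `ω((a,b),(c,d)) = a·d + b·c`. -/
def sympl {n : ℕ} (P Q : V n) : ZMod 2 :=
  ∑ i, (P.1 i * Q.2 i + P.2 i * Q.1 i)

/-- A finite set is (pairwise) anticommuting if `ω(P,Q) = 1` for all distinct `P, Q`. -/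
def AC {n : ℕ} (G : Finset (V n)) : Prop :=
  ∀ P ∈ G, ∀ Q ∈ G, P ≠ Q → sympl P Q = 1

/-- A maximal pairwise anticommuting set: no strictly larger set is anticommuting. -/
def MaxAC {n : ℕ} (G : Finset (V n)) : Prop :=
  AC G ∧ ∀ H : Finset (V n), G ⊆ H → AC H → H = G

/-!
For an anticommuting set `G` with sum `S`, pairing `S` with a member of `G` gives `#G + 1`, and
pairing it with a common anticommutant `Q` gives `#G` (everything mod 2). If `S = 0` both vanish,
which is absurd. If `S ≠ 0` and `#G` is even, `Q = S` is a common anticommutant. If `#G` is odd,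
pick `R` with `ω(R, S) = 1` by nondegeneracy; the set `B` of members of `G` commuting with `R` then
has even size, and `Q = R + ∑ B` anticommutes with every member of `G`.
-/

lemma ZMod.eq_zero_or_eq_one_mod_two (x : ZMod 2) : x = 0 ∨ x = 1 := by
  revert x; decide

lemma ZMod.add_one_eq_ite_mod_two (x : ZMod 2) : x + 1 = if x = 0 then 1 else 0 := by
  revert x; decide

lemma ZMod.add_ite_eq_one_mod_two (x : ZMod 2) : x + (if x = 0 then 1 else 0) = 1 := by
  revert x; decide

section Sympl

variable {n : ℕ}

lemma sympl_self (P : V n) : sympl P P = 0 :=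
  Finset.sum_eq_zero fun i _ => by rw [mul_comm (P.2 i)]; exact CharTwo.add_self_eq_zero _

lemma sympl_comm (P Q : V n) : sympl P Q = sympl Q P :=
  Finset.sum_congr rfl fun i _ => by ring

lemma sympl_add_right (Q A B : V n) : sympl Q (A + B) = sympl Q A + sympl Q B := by
  simp only [sympl, ← Finset.sum_add_distrib, Prod.fst_add, Prod.snd_add, Pi.add_apply]
  exact Finset.sum_congr rfl fun i _ => by ring

lemma sympl_zero_right (Q : V n) : sympl Q 0 = 0 := by
  simp [sympl]

lemma sympl_sum_right (Q : V n) (s : Finset (V n)) :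
    sympl Q (∑ x ∈ s, x) = ∑ x ∈ s, sympl Q x :=
  map_sum (AddMonoidHom.mk' (sympl Q) (sympl_add_right Q)) id s

lemma exists_sympl_eq_one {S : V n} (hS : S ≠ 0) : ∃ R : V n, sympl R S = 1 := by
  by_contra! h
  have hzero (R : V n) : sympl R S = 0 := (ZMod.eq_zero_or_eq_one_mod_two _).resolve_right (h R)
  refine hS (Prod.ext (funext fun i => ?_) (funext fun i => ?_))
  · simpa [sympl, Pi.single_apply] using hzero (0, Pi.single i 1)
  · simpa [sympl, Pi.single_apply] using hzero (Pi.single i 1, 0)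

lemma sympl_sum_eq_card {Q : V n} {B : Finset (V n)} (h : ∀ P ∈ B, sympl Q P = 1) :
    sympl Q (∑ x ∈ B, x) = B.card := by
  simp [sympl_sum_right, Finset.sum_congr rfl h]

lemma card_filter_sympl_eq_zero (R : V n) (G : Finset (V n)) :
    ((G.filter fun P => sympl R P = 0).card : ZMod 2) = sympl R (∑ x ∈ G, x) + G.card := by
  calc ((G.filter fun P => sympl R P = 0).card : ZMod 2)
      = ∑ P ∈ G, if sympl R P = 0 then 1 else 0 := (Finset.sum_boole _ G).symm
    _ = ∑ P ∈ G, (sympl R P + 1) := by simp only [ZMod.add_one_eq_ite_mod_two]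
    _ = sympl R (∑ x ∈ G, x) + G.card := by simp [Finset.sum_add_distrib, sympl_sum_right]

lemma AC.sympl_sum_of_subset {G B : Finset (V n)} (hG : AC G) (hB : B ⊆ G) {P : V n}
    (hP : P ∈ G) : sympl P (∑ x ∈ B, x) = B.card + if P ∈ B then 1 else 0 := by
  have hanti {C : Finset (V n)} (hC : C ⊆ G) (hPC : P ∉ C) : ∀ Q ∈ C, sympl P Q = 1 :=
    fun Q hQ => hG P hP Q (hC hQ) fun e => hPC (e ▸ hQ)
  split_ifs with hPB
  · rw [← Finset.add_sum_erase B (fun x => x) hPB, sympl_add_right, sympl_self, zero_add,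
      sympl_sum_eq_card (hanti ((B.erase_subset P).trans hB) (B.notMem_erase P)),
      ← Finset.card_erase_add_one hPB, Nat.cast_succ, add_assoc, CharTwo.add_self_eq_zero,
      add_zero]
  · rw [sympl_sum_eq_card (hanti hB hPB), add_zero]

lemma AC.sympl_sum {G : Finset (V n)} (hG : AC G) {P : V n} (hP : P ∈ G) :
    sympl P (∑ x ∈ G, x) = G.card + 1 := by
  rw [hG.sympl_sum_of_subset subset_rfl hP, if_pos hP]

lemma AC.not_exists_anticommutant_of_sum_eq_zero {G : Finset (V n)} (hG : AC G)
    (hne : G.Nonempty) (hS : ∑ x ∈ G, x = 0) : ¬ ∃ Q : V n, ∀ P ∈ G, sympl Q P = 1 := by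
  rintro ⟨Q, hQ⟩
  obtain ⟨P, hP⟩ := hne
  have hcard : (G.card : ZMod 2) = 0 := by rw [← sympl_sum_eq_card hQ, hS, sympl_zero_right]
  have := hG.sympl_sum hP
  rw [hS, sympl_zero_right, hcard, zero_add] at this
  exact zero_ne_one this

lemma AC.exists_anticommutant_of_sum_ne_zero {G : Finset (V n)} (hG : AC G)
    (hS : ∑ x ∈ G, x ≠ 0) : ∃ Q : V n, ∀ P ∈ G, sympl Q P = 1 := by
  rcases ZMod.eq_zero_or_eq_one_mod_two (G.card : ZMod 2) with heven | hodd
  · exact ⟨∑ x ∈ G, x, fun P hP => by rw [sympl_comm, hG.sympl_sum hP, heven, zero_add]⟩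
  obtain ⟨R, hR⟩ := exists_sympl_eq_one hS
  set B := G.filter fun P => sympl R P = 0
  have hB : (B.card : ZMod 2) = 0 := by
    rw [card_filter_sympl_eq_zero, hR, hodd]
    rfl
  refine ⟨R + ∑ x ∈ B, x, fun P hP => ?_⟩
  rw [sympl_comm, sympl_add_right, hG.sympl_sum_of_subset (Finset.filter_subset _ G) hP, hB,
    zero_add, sympl_comm P R]
  simpa [B, hP] using ZMod.add_ite_eq_one_mod_two (sympl R P)

end Sympl

theorem stmt_11 {n : ℕ} (G : Finset (V n)) (hG : AC G) (hne : G.Nonempty) :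
    (¬ ∃ Q : V n, ∀ P ∈ G, sympl Q P = 1) ↔ ∑ x ∈ G, x = (0 : V n) :=
  ⟨fun h => by_contra fun hS => h (hG.exists_anticommutant_of_sum_ne_zero hS),
    hG.not_exists_anticommutant_of_sum_eq_zero hne⟩
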